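/- Let σ : ℕ → ℝ be nonnegative with σ(t)² ≤ 1 for all t (i.e., posterior standard deviations bounded by 1), let σ_noise > 0, and suppose ∑_{t=1}^{T} min(1, σ_noise⁻²·σ(t)²) ≤ 2γ for some γ ≥ 0. Then ∑_{t=1}^{T} σ(t)² ≤ max(1, σ_noise²)·2γ, and by Cauchy–Schwarz ∑_{t=1}^{T} σ(t) ≤ √(T · max(1, σ_noise²) · 2γ). -/
import Mathlib


open Finset

/-- Width-sum bound: from the capped variance sum
`∑ min(1, σ_noise⁻² σ_t²) ≤ 2γ` with `σ_t² ≤ 1`, one obtains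
`∑ σ_t² ≤ max(1, σ_noise²)·2γ` and, by Cauchy–Schwarz,
`∑ σ_t ≤ √(T · max(1, σ_noise²) · 2γ)`. -/
theorem width_sum_bound (T : ℕ) (σ : ℕ → ℝ) (σn γ : ℝ)
    (hσ_nonneg : ∀ t, 0 ≤ σ t) (hσ_le : ∀ t, σ t ^ 2 ≤ 1)
    (hσn : 0 < σn) (hγ : 0 ≤ γ)
    (hcap : ∑ t ∈ Icc 1 T, min 1 (σn⁻¹ ^ 2 * σ t ^ 2) ≤ 2 * γ) :
    (∑ t ∈ Icc 1 T, σ t ^ 2 ≤ max 1 (σn ^ 2) * (2 * γ)) ∧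
    (∑ t ∈ Icc 1 T, σ t ≤ Real.sqrt ((T : ℝ) * max 1 (σn ^ 2) * (2 * γ))) := by
  have hM : (0:ℝ) ≤ max 1 (σn ^ 2) := le_trans zero_le_one (le_max_left _ _)
  have key : ∀ t, σ t ^ 2 ≤ max 1 (σn ^ 2) * min 1 (σn⁻¹ ^ 2 * σ t ^ 2) := by
    intro t
    rcases le_or_gt (σn⁻¹ ^ 2 * σ t ^ 2) 1 with h | h
    · rw [min_eq_right h]
      calc σ t ^ 2 = σn ^ 2 * (σn⁻¹ ^ 2 * σ t ^ 2) := by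
            field_simp
        _ ≤ max 1 (σn ^ 2) * (σn⁻¹ ^ 2 * σ t ^ 2) := by
            apply mul_le_mul_of_nonneg_right (le_max_right _ _)
            positivity
    · rw [min_eq_left h.le]
      simpa using (hσ_le t).trans (le_max_left 1 (σn ^ 2))
  have h1 : ∑ t ∈ Icc 1 T, σ t ^ 2 ≤ max 1 (σn ^ 2) * (2 * γ) := by
    calc ∑ t ∈ Icc 1 T, σ t ^ 2
        ≤ ∑ t ∈ Icc 1 T, max 1 (σn ^ 2) * min 1 (σn⁻¹ ^ 2 * σ t ^ 2) :=
          Finset.sum_le_sum fun t _ => key t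
      _ = max 1 (σn ^ 2) * ∑ t ∈ Icc 1 T, min 1 (σn⁻¹ ^ 2 * σ t ^ 2) := by
          rw [Finset.mul_sum]
      _ ≤ max 1 (σn ^ 2) * (2 * γ) := mul_le_mul_of_nonneg_left hcap hM
  refine ⟨h1, ?_⟩
  have hsq : (∑ t ∈ Icc 1 T, σ t) ^ 2 ≤ (T : ℝ) * max 1 (σn ^ 2) * (2 * γ) := by
    calc (∑ t ∈ Icc 1 T, σ t) ^ 2
        ≤ (#(Icc 1 T) : ℝ) * ∑ t ∈ Icc 1 T, σ t ^ 2 := by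
          exact_mod_cast sq_sum_le_card_mul_sum_sq (s := Icc 1 T) (f := σ)
      _ ≤ (T : ℝ) * (max 1 (σn ^ 2) * (2 * γ)) := by
          rw [Nat.card_Icc]
          apply mul_le_mul _ h1 (Finset.sum_nonneg fun t _ => by positivity)
            (by positivity)
          · simp
      _ = (T : ℝ) * max 1 (σn ^ 2) * (2 * γ) := by ring
  have := Real.sqrt_le_sqrt hsq
  rwa [Real.sqrt_sq (Finset.sum_nonneg fun t _ => hσ_nonneg t)] at this
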